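/- Let a < b be real numbers and let r : [a,b] → ℝ be continuous. Set C = ∫_a^b r(t) dt and R(z) = ∫_a^z r(t) dt. If for every z ∈ (a,b), −C²/(b−a)² + R(z)²/((b−a)(z−a)) + (C−R(z))²/((b−a)(b−z)) = 0, then r is constant on [a,b]. -/

import Mathlib

/-!
The criterion at `z` equals `((b - a) R(z) - (z - a) C)² / ((b - a)² (z - a) (b - z))`, so it
vanishes exactly when `R(z) = C (z - a) / (b - a)`. Hence the primitive `R` is affine on `(a, b)`;
differentiating, `r` equals the slope `C / (b - a)` there, and by continuity on all of `[a, b]`.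
-/

open Set Filter Topology

theorem split_criterion_eq {s p q : ℝ} (C R : ℝ) (hs : s = p + q) (hs₀ : s ≠ 0) (hp : p ≠ 0)
    (hq : q ≠ 0) :
    -C ^ 2 / s ^ 2 + R ^ 2 / (s * p) + (C - R) ^ 2 / (s * q) =
      (s * R - p * C) ^ 2 / (s ^ 2 * p * q) := by
  field_simp
  subst hs
  ring

theorem split_criterion_eq_zero_iff {s p q : ℝ} (C R : ℝ) (hs : s = p + q) (hs₀ : s ≠ 0)
    (hp : p ≠ 0) (hq : q ≠ 0) :
    -C ^ 2 / s ^ 2 + R ^ 2 / (s * p) + (C - R) ^ 2 / (s * q) = 0 ↔ s * R = p * C := by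
  rw [split_criterion_eq C R hs hs₀ hp hq, div_eq_zero_iff, sq_eq_zero_iff, sub_eq_zero]
  simp [hs₀, hp, hq]

theorem eqOn_Ioo_of_integral_eq_linear {r : ℝ → ℝ} {a b c : ℝ} (hr : ContinuousOn r (Icc a b))
    (h : ∀ z ∈ Ioo a b, ∫ t in a..z, r t = c * (z - a)) : EqOn r (fun _ ↦ c) (Ioo a b) := by
  intro x hx
  have hint : IntervalIntegrable r MeasureTheory.volume a x :=
    (hr.mono (uIcc_of_le hx.1.le ▸ Icc_subset_Icc_right hx.2.le)).intervalIntegrable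
  have hmeas : StronglyMeasurableAtFilter r (𝓝 x) :=
    (hr.mono Ioo_subset_Icc_self).stronglyMeasurableAtFilter isOpen_Ioo x hx
  have hprim : HasDerivAt (fun z ↦ ∫ t in a..z, r t) (r x) x :=
    intervalIntegral.integral_hasDerivAt_right hint hmeas (hr.continuousAt (Icc_mem_nhds hx.1 hx.2))
  have hlin : HasDerivAt (fun z ↦ c * (z - a)) c x := by
    simpa using ((hasDerivAt_id x).sub_const a).const_mul c
  exact hprim.unique (hlin.congr_of_eventuallyEq (eventually_of_mem (isOpen_Ioo.mem_nhds hx) h))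

theorem eqOn_Icc_of_integral_eq_linear {r : ℝ → ℝ} {a b c : ℝ} (hab : a < b)
    (hr : ContinuousOn r (Icc a b)) (h : ∀ z ∈ Ioo a b, ∫ t in a..z, r t = c * (z - a)) :
    EqOn r (fun _ ↦ c) (Icc a b) :=
  (eqOn_Ioo_of_integral_eq_linear hr h).of_subset_closure hr continuousOn_const Ioo_subset_Icc_self
    (closure_Ioo hab.ne).symm.subset

/-- Univariate case of Lemma 1 of the paper: if the population CART criterion
`L*(1,z)` vanishes for every cut position `z ∈ (a,b)`, the regression function `r`
is constant on `[a,b]`. -/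
theorem stmt_7 (a b : ℝ) (hab : a < b) (r : ℝ → ℝ)
    (hr : ContinuousOn r (Set.Icc a b))
    (h : ∀ z ∈ Set.Ioo a b,
      -(∫ t in a..b, r t) ^ 2 / (b - a) ^ 2
        + (∫ t in a..z, r t) ^ 2 / ((b - a) * (z - a))
        + ((∫ t in a..b, r t) - ∫ t in a..z, r t) ^ 2 / ((b - a) * (b - z)) = 0) :
    ∃ c, ∀ x ∈ Set.Icc a b, r x = c := by
  have hba : b - a ≠ 0 := sub_ne_zero.2 hab.ne'
  refine ⟨(∫ t in a..b, r t) / (b - a), eqOn_Icc_of_integral_eq_linear hab hr fun z hz ↦ ?_⟩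
  have hlin := (split_criterion_eq_zero_iff _ _ (by ring) hba (sub_ne_zero.2 hz.1.ne')
    (sub_ne_zero.2 hz.2.ne')).1 (h z hz)
  field_simp
  linarith
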